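/- Let f: ℕ → ℕ be a non-constant polynomial with real coefficients taking positive integer values, and define x_n = 0.f(n)f(n+1)f(n+2)... ∈ [0,1) by concatenating the decimal expansions of f(n), f(n+1), .... Then (x_n) is not uniformly distributed mod 1 over [0.1, 1). -/

import Mathlib

/-!
Since `f n ~ c n ^ d` with `c > 0`, for every large `k` the `n` with `10 ^ k ≤ f n < 1.9 · 10 ^ k`
fill an interval `(p, q]` with `p ≤ r q` for a fixed `r < 1`. For these `n` the leading digit of
`f n`, hence the first digit of `x n`, is `1`, so `x n ∈ [0.1, 0.2)`. Uniform distribution would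
give this event density `1/9`, but the proportion of such `n` in `[1, q]` is then at least about
`1 - r (1 - 1/9) > 1/9`.
-/

open scoped Classical
open Filter

/-- Number of decimal digits of `m`. -/
def numDigits (m : ℕ) : ℕ := (Nat.digits 10 m).length

/-- The natural number obtained by concatenating the decimal expansions of
`a 0, a 1, …, a K`. -/
def concatBlock (a : ℕ → ℕ) : ℕ → ℕ
  | 0 => a 0
  | K + 1 => concatBlock a K * 10 ^ numDigits (a (K + 1)) + a (K + 1)

/-- The total number of decimal digits of `a 0, a 1, …, a K`. -/
def totalDigits (a : ℕ → ℕ) : ℕ → ℕ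
  | 0 => numDigits (a 0)
  | K + 1 => totalDigits a K + numDigits (a (K + 1))

/-- The real number `0.(a 0)(a 1)(a 2)…` obtained by concatenating the decimal
expansions of `a 0, a 1, a 2, …` after the decimal point. -/
noncomputable def concatReal (a : ℕ → ℕ) : ℝ :=
  ⨆ K : ℕ, (concatBlock a K : ℝ) / 10 ^ totalDigits a K

/-- `x` is uniformly distributed mod 1 over `[α, β)`. -/
def UDOver (x : ℕ → ℝ) (α β : ℝ) : Prop :=
  ∀ a b : ℝ, α ≤ a → a < b → b ≤ β →
    Filter.Tendsto
      (fun N : ℕ => (((Finset.Icc 1 N).filter (fun n => x n ∈ Set.Ico a b)).card : ℝ) / N)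
      Filter.atTop (nhds ((b - a) / (β - α)))

open Finset Asymptotics

lemma numDigits_eq_of_le_of_lt {m k : ℕ} (h₁ : 10 ^ k ≤ m) (h₂ : m < 10 ^ (k + 1)) :
    numDigits m = k + 1 := by
  have hm : m ≠ 0 := (Nat.pos_of_ne_zero (by positivity) |>.trans_le h₁).ne'
  rw [numDigits, Nat.length_digits 10 m (by norm_num) hm, Nat.log_eq_of_pow_le_of_lt_pow h₁ h₂]

lemma concatBlock_add_one_mul_le (a : ℕ → ℕ) (K : ℕ) :
    (concatBlock a K + 1) * 10 ^ numDigits (a 0) ≤ (a 0 + 1) * 10 ^ totalDigits a K := by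
  induction K with
  | zero => simp [concatBlock, totalDigits]
  | succ K ih =>
    have hlt : a (K + 1) < 10 ^ numDigits (a (K + 1)) :=
      Nat.lt_base_pow_length_digits (by norm_num)
    calc (concatBlock a (K + 1) + 1) * 10 ^ numDigits (a 0)
        ≤ (concatBlock a K + 1) * 10 ^ numDigits (a 0) * 10 ^ numDigits (a (K + 1)) := by
          rw [concatBlock]; nlinarith [pow_pos (by norm_num : 0 < 10) (numDigits (a 0))]
      _ ≤ (a 0 + 1) * 10 ^ totalDigits a K * 10 ^ numDigits (a (K + 1)) := by gcongr
      _ = (a 0 + 1) * 10 ^ totalDigits a (K + 1) := by rw [totalDigits, pow_add, mul_assoc]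

lemma concatBlock_div_le (a : ℕ → ℕ) (K : ℕ) :
    (concatBlock a K : ℝ) / 10 ^ totalDigits a K ≤ (a 0 + 1) / 10 ^ numDigits (a 0) := by
  rw [div_le_div_iff₀ (by positivity) (by positivity)]
  exact_mod_cast (Nat.mul_le_mul_right _ (Nat.le_succ _)).trans (concatBlock_add_one_mul_le a K)

lemma concatReal_le (a : ℕ → ℕ) : concatReal a ≤ (a 0 + 1) / 10 ^ numDigits (a 0) :=
  ciSup_le (concatBlock_div_le a)

lemma le_concatReal (a : ℕ → ℕ) : (a 0 : ℝ) / 10 ^ numDigits (a 0) ≤ concatReal a :=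
  le_ciSup (f := fun K => (concatBlock a K : ℝ) / 10 ^ totalDigits a K)
    ⟨_, Set.forall_mem_range.2 (concatBlock_div_le a)⟩ 0

/-- The upper bound `a 0 + 1 < 2 * 10 ^ k` is strict because `0.1999… = 0.2`. -/
lemma concatReal_mem_Ico {a : ℕ → ℕ} {k : ℕ} (h₁ : 10 ^ k ≤ a 0) (h₂ : a 0 + 1 < 2 * 10 ^ k) :
    concatReal a ∈ Set.Ico (0.1 : ℝ) 0.2 := by
  have hD : numDigits (a 0) = k + 1 := numDigits_eq_of_le_of_lt h₁ (by rw [pow_succ]; omega)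
  have h₁' : (10 : ℝ) ^ k ≤ a 0 := by exact_mod_cast h₁
  have h₂' : (a 0 : ℝ) + 1 < 2 * 10 ^ k := by exact_mod_cast h₂
  constructor
  · refine le_trans ?_ (le_concatReal a)
    rw [hD, le_div_iff₀ (by positivity), pow_succ]
    linarith
  · refine (concatReal_le a).trans_lt ?_
    rw [hD, div_lt_iff₀ (by positivity), pow_succ]
    linarith

lemma card_filter_Icc_add_le {P : ℕ → Prop} [DecidablePred P] {p q : ℕ} (hpq : p ≤ q)
    (hP : ∀ n, p < n → n ≤ q → P n) :
    #{n ∈ Icc 1 p | P n} + (q - p) ≤ #{n ∈ Icc 1 q | P n} := by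
  have hdisj : Disjoint {n ∈ Icc 1 p | P n} (Ioc p q) :=
    disjoint_left.2 fun n hn hn' => by simp only [mem_filter, mem_Icc, mem_Ioc] at hn hn'; omega
  rw [← Nat.card_Ioc, ← card_union_of_disjoint hdisj]
  refine card_le_card fun n hn => ?_
  simp only [mem_union, mem_filter, mem_Icc, mem_Ioc] at hn ⊢
  rcases hn with ⟨⟨h1, h2⟩, h3⟩ | ⟨h1, h2⟩
  · exact ⟨⟨h1, h2.trans hpq⟩, h3⟩
  · exact ⟨⟨by omega, h2⟩, hP n h1 h2⟩

lemma not_tendsto_card_filter_div_of_runs {P : ℕ → Prop} [DecidablePred P] {L r : ℝ}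
    (hL : L < 1) (hr : r < 1)
    (hruns : ∀ M : ℕ, ∃ p q : ℕ, M ≤ p ∧ (p : ℝ) ≤ r * q ∧ ∀ n, p < n → n ≤ q → P n) :
    ¬ Tendsto (fun N : ℕ => (#{n ∈ Icc 1 N | P n} : ℝ) / N) atTop (nhds L) := by
  intro hlim
  set ε := (1 - r) * (1 - L) / 2
  have hε : 0 < ε := by have := mul_pos (sub_pos.2 hr) (sub_pos.2 hL); positivity
  obtain ⟨N₀, hN₀⟩ := eventually_atTop.1 (Metric.tendsto_nhds.1 hlim ε hε)
  obtain ⟨p, q, hMp, hpq, hP⟩ := hruns (max N₀ 1)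
  have hp : (0 : ℝ) < p := by exact_mod_cast (le_max_right _ _).trans hMp
  have hpq' : p ≤ q := by
    have : (p : ℝ) ≤ q := hpq.trans (by nlinarith [hp.trans_le hpq])
    exact_mod_cast this
  have hq : (0 : ℝ) < q := hp.trans_le (by exact_mod_cast hpq')
  have hcount := card_filter_Icc_add_le hpq' hP
  have hlow : (L - ε) * p < #{n ∈ Icc 1 p | P n} := by
    have := (abs_lt.1 (hN₀ p ((le_max_left _ _).trans hMp))).1
    rw [← lt_div_iff₀ hp]; linarith
  have hhigh : (#{n ∈ Icc 1 q | P n} : ℝ) < (L + ε) * q := by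
    have := (abs_lt.1 (hN₀ q ((le_max_left _ _).trans (hMp.trans hpq')))).2
    rw [← div_lt_iff₀ hq]; linarith
  have hcount' : (#{n ∈ Icc 1 p | P n} : ℝ) + (q - p) ≤ #{n ∈ Icc 1 q | P n} := by
    have := (Nat.cast_le (α := ℝ)).2 hcount
    push_cast [Nat.cast_sub hpq'] at this
    exact this
  -- the run `(p, q]` pushes the proportion at `q` up to about `1 - r (1 - L) > L`
  have hrun : (1 - r * (1 - L + ε)) * q < (L + ε) * q := by
    nlinarith [mul_le_mul_of_nonneg_left hpq (by linarith : 0 ≤ 1 - L + ε)]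
  have hrun' := lt_of_mul_lt_mul_right hrun hq.le
  have hε2 : 2 * ε = (1 - r) * (1 - L) := by simp only [ε]; ring
  nlinarith [mul_pos hε (sub_pos.2 hr)]

lemma Asymptotics.IsEquivalent.eventually_inv_mul_lt_and_lt_mul {α : Type*} {l : Filter α}
    {g h : α → ℝ} (hgh : g ~[l] h) (hpos : ∀ᶠ x in l, 0 < h x) {σ : ℝ} (hσ : 1 < σ) :
    ∀ᶠ x in l, σ⁻¹ * h x < g x ∧ g x < σ * h x := by
  have hratio : Tendsto (fun x => g x / h x) l (nhds 1) :=
    (isEquivalent_iff_tendsto_one (hpos.mono fun _ hx => hx.ne')).1 hgh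
  have hmem : Set.Ioo σ⁻¹ σ ∈ nhds (1 : ℝ) := Ioo_mem_nhds (inv_lt_one_of_one_lt₀ hσ) hσ
  filter_upwards [hratio hmem, hpos] with x ⟨hlo, hhi⟩ hx
  exact ⟨(lt_div_iff₀ hx).1 hlo, (div_lt_iff₀ hx).1 hhi⟩

lemma Polynomial.leadingCoeff_pos_of_frequently_nonneg {f : Polynomial ℝ} (hf : 0 < f.degree)
    (h : ∃ᶠ x in atTop, 0 ≤ f.eval x) : 0 < f.leadingCoeff := by
  by_contra! hlc
  have hneg := (f.tendsto_atBot_of_leadingCoeff_nonpos hf hlc).eventually_lt_atBot 0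
  obtain ⟨x, hx, hx'⟩ := (h.and_eventually hneg).exists
  linarith

lemma eventually_exists_Ioc_runs {s : ℝ} (hs : 1 < s) :
    ∃ r < 1, ∀ M : ℕ, ∀ᶠ A : ℝ in atTop, ∃ p q : ℕ, M ≤ p ∧ (p : ℝ) ≤ r * q ∧
      ∀ n : ℕ, p < n → n ≤ q → A ≤ n ∧ (n : ℝ) ≤ s * A := by
  set r := 2 / (1 + s)
  have hr : 0 < r := by positivity
  have hrs : 1 < r * s := by rw [div_mul_eq_mul_div, one_lt_div (by linarith)]; linarith
  refine ⟨r, by rw [div_lt_one (by linarith)]; linarith, fun M => ?_⟩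
  filter_upwards [eventually_ge_atTop (M : ℝ), eventually_ge_atTop ((1 + r) / (r * s - 1))]
    with A hAM hAr
  have hA : 0 ≤ A := (Nat.cast_nonneg M).trans hAM
  have hgap : A + 1 ≤ r * (s * A - 1) := by
    rw [div_le_iff₀ (by linarith)] at hAr; linarith
  refine ⟨⌈A⌉₊, ⌊s * A⌋₊, Nat.cast_le.1 (hAM.trans (Nat.le_ceil A)), ?_, fun n hpn hnq => ?_⟩
  · calc (⌈A⌉₊ : ℝ) ≤ A + 1 := (Nat.ceil_lt_add_one hA).le
      _ ≤ r * (s * A - 1) := hgap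
      _ ≤ r * ⌊s * A⌋₊ := by gcongr; linarith [Nat.lt_floor_add_one (s * A)]
  · exact ⟨(Nat.le_ceil A).trans (by exact_mod_cast hpn.le),
      (Nat.cast_le.2 hnq).trans (Nat.floor_le (by positivity))⟩

lemma eventually_exists_Ioc_runs_of_isEquivalent {g : ℝ → ℝ} {c : ℝ} {d : ℕ} (hc : 0 < c)
    (hd : d ≠ 0) (hg : g ~[atTop] fun x => c * x ^ d) {κ : ℝ} (hκ : 1 < κ) :
    ∃ r < 1, ∀ M : ℕ, ∀ᶠ X : ℝ in atTop, ∃ p q : ℕ, M ≤ p ∧ (p : ℝ) ≤ r * q ∧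
      ∀ n : ℕ, p < n → n ≤ q → X ≤ g n ∧ g n < κ * X := by
  obtain ⟨σ, hσ, hσκ⟩ : ∃ σ : ℝ, 1 < σ ∧ σ ^ 3 = κ :=
    ⟨κ ^ ((3 : ℕ) : ℝ)⁻¹, Real.one_lt_rpow hκ (by positivity),
      Real.rpow_inv_natCast_pow (by positivity) (by norm_num)⟩
  have hd' : (0 : ℝ) < (d : ℝ)⁻¹ := by positivity
  obtain ⟨r, hr, hruns⟩ := eventually_exists_Ioc_runs (Real.one_lt_rpow hσ hd')
  refine ⟨r, hr, fun M => ?_⟩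
  obtain ⟨x₀, hx₀⟩ := eventually_atTop.1 (hg.eventually_inv_mul_lt_and_lt_mul
    ((eventually_gt_atTop 0).mono fun x hx => by positivity) hσ)
  set A : ℝ → ℝ := fun X => (σ * X / c) ^ (d : ℝ)⁻¹
  have hA : Tendsto A atTop atTop :=
    (tendsto_rpow_atTop hd').comp ((tendsto_id.const_mul_atTop (by linarith)).atTop_div_const hc)
  filter_upwards [hA.eventually (hruns M), hA.eventually (eventually_ge_atTop x₀),
    eventually_gt_atTop 0] with X ⟨p, q, hMp, hpq, hrun⟩ hAx₀ hX
  refine ⟨p, q, hMp, hpq, fun n hpn hnq => ?_⟩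
  obtain ⟨hAn, hnA⟩ := hrun n hpn hnq
  have hApow : c * A X ^ d = σ * X := by
    rw [Real.rpow_inv_natCast_pow (by positivity) hd]; field_simp
  have hlow : σ * X ≤ c * (n : ℝ) ^ d := by
    rw [← hApow]; gcongr
  have hhigh : c * (n : ℝ) ^ d ≤ σ * (σ * X) := by
    calc c * (n : ℝ) ^ d ≤ c * (σ ^ (d : ℝ)⁻¹ * A X) ^ d := by gcongr
      _ = σ * (σ * X) := by
        rw [mul_pow, Real.rpow_inv_natCast_pow (by positivity) hd, ← hApow]; ring
  obtain ⟨hgl, hgh⟩ := hx₀ n (hAx₀.trans hAn)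
  constructor
  · calc X = σ⁻¹ * (σ * X) := by field_simp
      _ ≤ σ⁻¹ * (c * (n : ℝ) ^ d) := by gcongr
      _ ≤ g n := hgl.le
  · calc g n < σ * (c * (n : ℝ) ^ d) := hgh
      _ ≤ σ * (σ * (σ * X)) := by gcongr
      _ = κ * X := by rw [← hσκ]; ring

theorem stmt14_general (f : Polynomial ℝ) (hd : 1 ≤ f.natDegree)
    (F : ℕ → ℕ) (hF : ∀ n : ℕ, (F n : ℝ) = f.eval (n : ℝ)) :
    ¬ UDOver (fun n => concatReal (fun i => F (n + i))) 0.1 1 := by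
  intro hud
  have hc : 0 < f.leadingCoeff :=
    f.leadingCoeff_pos_of_frequently_nonneg (Polynomial.natDegree_pos_iff_degree_pos.1 hd)
      (tendsto_natCast_atTop_atTop.frequently
        (Frequently.of_forall fun n => hF n ▸ (F n).cast_nonneg))
  obtain ⟨r, hr, hruns⟩ := eventually_exists_Ioc_runs_of_isEquivalent hc (by omega)
    f.isEquivalent_atTop_lead (κ := 1.9) (by norm_num)
  refine not_tendsto_card_filter_div_of_runs (L := 1 / 9) (by norm_num) hr (fun M => ?_)
    (by convert hud 0.1 0.2 le_rfl (by norm_num) (by norm_num) using 2; norm_num)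
  obtain ⟨k, ⟨p, q, hMp, hpq, hrun⟩, hk⟩ :=
    (((tendsto_pow_atTop_atTop_of_one_lt (by norm_num : (1 : ℝ) < 10)).eventually
      (hruns M)).and (eventually_ge_atTop 1)).exists
  refine ⟨p, q, hMp, hpq, fun n hpn hnq => ?_⟩
  obtain ⟨hlow, hhigh⟩ := hrun n hpn hnq
  rw [← hF] at hlow hhigh
  have h10 : (10 : ℝ) ≤ 10 ^ k := le_self_pow₀ (by norm_num) (by omega)
  refine concatReal_mem_Ico (k := k) ?_ ?_ <;> simp only [add_zero]
  · exact_mod_cast hlow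
  · exact_mod_cast (by linarith : (F n : ℝ) + 1 < 2 * 10 ^ k)

/-- Let `F : ℕ → ℕ` be a non-constant polynomial with real coefficients
taking positive integer values, and let
`x n = 0.(F n)(F (n+1))(F (n+2))…`. Then `(x n)` is not uniformly
distributed mod 1 over `[0.1, 1)`. -/
theorem stmt14 (f : Polynomial ℝ) (hd : 1 ≤ f.natDegree)
    (F : ℕ → ℕ) (hF : ∀ n : ℕ, (F n : ℝ) = f.eval (n : ℝ)) (hpos : ∀ n, 0 < F n) :
    ¬ UDOver (fun n => concatReal (fun i => F (n + i))) 0.1 1 :=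
  stmt14_general f hd F hF
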